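/- In a complete Busemann convex geodesic space that is additionally δ-hyperbolic, every closed and convex set that is geodesically bounded is directionally bounded. -/

import Mathlib

open Set Filter Metric

section Defs

variable {X : Type*} [MetricSpace X]

/-- A unit-speed geodesic defined on `[a, b]`. -/
def IsGeodesicOn (γ : ℝ → X) (a b : ℝ) : Prop :=
  ∀ s ∈ Set.Icc a b, ∀ t ∈ Set.Icc a b, dist (γ s) (γ t) = |s - t|

/-- `S` is a geodesic segment joining `x` and `y`. -/
def IsGeodesicSegment (S : Set X) (x y : X) : Prop :=
  ∃ (a b : ℝ) (γ : ℝ → X), a ≤ b ∧ IsGeodesicOn γ a b ∧ γ a = x ∧ γ b = y ∧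
    S = γ '' Set.Icc a b

/-- A geodesic space: every two points are joined by a geodesic segment. -/
def GeodesicSpace (X : Type*) [MetricSpace X] : Prop :=
  ∀ x y : X, ∃ S : Set X, IsGeodesicSegment S x y

/-- A uniquely geodesic space. -/
def UniquelyGeodesic (X : Type*) [MetricSpace X] : Prop :=
  ∀ x y : X, ∃! S : Set X, IsGeodesicSegment S x y

/-- `S` is contained in the closed `M`-neighborhood of `T`. -/
def InClosedNbhd (S T : Set X) (M : ℝ) : Prop :=
  ∀ p ∈ S, ∃ q ∈ T, dist p q ≤ M

/-- A triangle with sides `S1, S2, S3` is `M`-slim. -/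
def SlimTriangle (S1 S2 S3 : Set X) (M : ℝ) : Prop :=
  InClosedNbhd S1 (S2 ∪ S3) M ∧ InClosedNbhd S2 (S1 ∪ S3) M ∧ InClosedNbhd S3 (S1 ∪ S2) M

/-- `X` is `δ`-hyperbolic: every geodesic triangle is `δ`-slim. -/
def DeltaHyperbolic (X : Type*) [MetricSpace X] (δ : ℝ) : Prop :=
  ∀ x y z : X, ∀ S1 S2 S3 : Set X,
    IsGeodesicSegment S1 x y → IsGeodesicSegment S2 y z → IsGeodesicSegment S3 z x →
    SlimTriangle S1 S2 S3 δ

/-- A geodesic ray `γ : [0, ∞) → X`. -/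
def IsGeodesicRay (γ : ℝ → X) : Prop :=
  ∀ s ∈ Set.Ici (0:ℝ), ∀ t ∈ Set.Ici (0:ℝ), dist (γ s) (γ t) = |s - t|

/-- A set is geodesically bounded if it contains no geodesic ray. -/
def GeodesicallyBounded (A : Set X) : Prop :=
  ¬ ∃ γ : ℝ → X, IsGeodesicRay γ ∧ ∀ t ∈ Set.Ici (0:ℝ), γ t ∈ A

/-- A directional curve `γ : [0, ∞) → X` (with some constant `b ≥ 0`). -/
def IsDirectionalCurve (γ : ℝ → X) : Prop :=
  ∃ b : ℝ, 0 ≤ b ∧ ∀ s ∈ Set.Ici (0:ℝ), ∀ t ∈ Set.Ici (0:ℝ),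
    |s - t| - b ≤ dist (γ s) (γ t) ∧ dist (γ s) (γ t) ≤ |s - t|

/-- A set is directionally bounded if it contains no directional curve. -/
def DirectionallyBounded (A : Set X) : Prop :=
  ¬ ∃ γ : ℝ → X, IsDirectionalCurve γ ∧ ∀ t ∈ Set.Ici (0:ℝ), γ t ∈ A

/-- A subset of a geodesic space is convex if every geodesic segment joining two of its
points is contained in it. -/
def GeodesicConvex (A : Set X) : Prop :=
  ∀ x ∈ A, ∀ y ∈ A, ∀ S : Set X, IsGeodesicSegment S x y → S ⊆ A

/-- The comparison point in the Euclidean plane: the point on the segment from `x'` to `y'`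
(of length `L`) at distance `t` from `x'`. -/
noncomputable def cmpPt (x' y' : EuclideanSpace ℝ (Fin 2)) (L t : ℝ) :
    EuclideanSpace ℝ (Fin 2) :=
  AffineMap.lineMap x' y' (t / L)

/-- `X` is a CAT(0) space: it is geodesic and for every geodesic triangle and every
comparison triangle in the Euclidean plane, distances between points on the triangle are
bounded by the distances between the corresponding comparison points. -/
def CAT0Space (X : Type*) [MetricSpace X] : Prop :=
  GeodesicSpace X ∧
  ∀ (x y z : X) (γ1 γ2 γ3 : ℝ → X),
    IsGeodesicOn γ1 0 (dist x y) → γ1 0 = x → γ1 (dist x y) = y →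
    IsGeodesicOn γ2 0 (dist y z) → γ2 0 = y → γ2 (dist y z) = z →
    IsGeodesicOn γ3 0 (dist z x) → γ3 0 = z → γ3 (dist z x) = x →
    ∀ x' y' z' : EuclideanSpace ℝ (Fin 2),
      dist x' y' = dist x y → dist y' z' = dist y z → dist z' x' = dist z x →
      (∀ s ∈ Set.Icc (0:ℝ) (dist x y), ∀ t ∈ Set.Icc (0:ℝ) (dist y z),
        dist (γ1 s) (γ2 t) ≤ dist (cmpPt x' y' (dist x y) s) (cmpPt y' z' (dist y z) t)) ∧
      (∀ s ∈ Set.Icc (0:ℝ) (dist y z), ∀ t ∈ Set.Icc (0:ℝ) (dist z x),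
        dist (γ2 s) (γ3 t) ≤ dist (cmpPt y' z' (dist y z) s) (cmpPt z' x' (dist z x) t)) ∧
      (∀ s ∈ Set.Icc (0:ℝ) (dist z x), ∀ t ∈ Set.Icc (0:ℝ) (dist x y),
        dist (γ3 s) (γ1 t) ≤ dist (cmpPt z' x' (dist z x) s) (cmpPt x' y' (dist x y) t))

/-- Busemann convexity. -/
def BusemannConvex (X : Type*) [MetricSpace X] : Prop :=
  GeodesicSpace X ∧
  ∀ (a b c d : ℝ) (γ σ : ℝ → X), a ≤ b → c ≤ d →
    IsGeodesicOn γ a b → IsGeodesicOn σ c d →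
    ∀ t ∈ Set.Icc (0:ℝ) 1,
      dist (γ ((1-t)*a + t*b)) (σ ((1-t)*c + t*d)) ≤
        (1-t) * dist (γ a) (σ c) + t * dist (γ b) (σ d)

/-- A `(lam, eps)`-quasi-geodesic defined on `[a, b]`. -/
def IsQuasiGeodesicOn (lam eps : ℝ) (γ : ℝ → X) (a b : ℝ) : Prop :=
  ∀ s ∈ Set.Icc a b, ∀ t ∈ Set.Icc a b,
    (1/lam) * |s - t| - eps ≤ dist (γ s) (γ t) ∧ dist (γ s) (γ t) ≤ lam * |s - t| + eps

/-- A `(lam, eps)`-quasi-geodesic ray. -/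
def IsQuasiGeodesicRay (lam eps : ℝ) (γ : ℝ → X) : Prop :=
  ∀ s ∈ Set.Ici (0:ℝ), ∀ t ∈ Set.Ici (0:ℝ),
    (1/lam) * |s - t| - eps ≤ dist (γ s) (γ t) ∧ dist (γ s) (γ t) ≤ lam * |s - t| + eps

/-- A `k`-local `lam`-quasi-geodesic ray: a `(lam, eps)`-quasi-geodesic ray locally,
for every `eps > 0`. -/
def IsLocalQuasiGeodesicRay (k lam : ℝ) (γ : ℝ → X) : Prop :=
  ∀ eps > (0:ℝ), ∀ s ∈ Set.Ici (0:ℝ), ∀ t ∈ Set.Ici (0:ℝ), |s - t| ≤ k →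
    (1/lam) * |s - t| - eps ≤ dist (γ s) (γ t) ∧ dist (γ s) (γ t) ≤ lam * |s - t| + eps

/-- `S` is the image of a `lam`-quasi-geodesic joining `x` and `y`
(i.e. a `(lam, eps)`-quasi-geodesic for every `eps > 0`). -/
def IsQuasiGeodesicSegment (lam : ℝ) (S : Set X) (x y : X) : Prop :=
  ∃ (a b : ℝ) (γ : ℝ → X), a ≤ b ∧ (∀ eps > (0:ℝ), IsQuasiGeodesicOn lam eps γ a b) ∧
    γ a = x ∧ γ b = y ∧ S = γ '' Set.Icc a b

/-- Every `lam`-quasi-geodesic triangle in `X` is `M`-slim. -/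
def QuasiGeodesicTrianglesSlim (X : Type*) [MetricSpace X] (lam M : ℝ) : Prop :=
  ∀ x y z : X, ∀ S1 S2 S3 : Set X,
    IsQuasiGeodesicSegment lam S1 x y → IsQuasiGeodesicSegment lam S2 y z →
    IsQuasiGeodesicSegment lam S3 z x → SlimTriangle S1 S2 S3 M

/-- A play of the Lion-Man game in `A` with speed `D`. -/
def IsLionManPlay (A : Set X) (D : ℝ) (L M : ℕ → X) : Prop :=
  (∀ n, L n ∈ A) ∧ (∀ n, M n ∈ A) ∧
  (∀ n, ∃ S : Set X, IsGeodesicSegment S (L n) (M n) ∧ L (n+1) ∈ S) ∧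
  (∀ n, dist (L n) (L (n+1)) = min D (dist (L n) (M n))) ∧
  (∀ n, dist (M n) (M (n+1)) ≤ D)

/-- The lion wins a play if `d(L_{n+1}, M_n) → 0`. -/
def LionWins (L M : ℕ → X) : Prop :=
  Filter.Tendsto (fun n => dist (L (n+1)) (M n)) Filter.atTop (nhds 0)

/-- The lion always wins the Lion-Man game played in `A`. -/
def LionAlwaysWins (A : Set X) : Prop :=
  ∀ D > (0:ℝ), ∀ L M : ℕ → X, IsLionManPlay A D L M → LionWins L M

end Defs

/-!
Let `γ` be a directional curve in `A` with constant `b`, and let `σₙ` be a geodesic from `γ 0`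
to `γ n`. For `n ≤ m` the Gromov product of `γ n` and `γ m` at `γ 0` is at least `n - b`, so
`δ`-hyperbolicity keeps `σₙ` and `σₘ` within `2δ` of each other up to time `s = n - b - δ - 1`,
and Busemann convexity shrinks this to `2δ t / s` at time `t ≤ s`. Hence `σₙ t` is Cauchy for
every `t`; in the complete space the pointwise limit is a geodesic ray, and it lies in `A`
because `A` is closed and convex.
-/

open Topology

section Geodesics

variable {X : Type*} [MetricSpace X]

lemma IsGeodesicOn.mono {γ : ℝ → X} {a b a' b' : ℝ} (h : IsGeodesicOn γ a b) (ha : a ≤ a')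
    (hb : b' ≤ b) : IsGeodesicOn γ a' b' :=
  fun s hs t ht => h s ⟨ha.trans hs.1, hs.2.trans hb⟩ t ⟨ha.trans ht.1, ht.2.trans hb⟩

lemma IsGeodesicOn.dist_eq_sub {γ : ℝ → X} {a b s t : ℝ} (h : IsGeodesicOn γ a b)
    (has : a ≤ s) (hst : s ≤ t) (htb : t ≤ b) : dist (γ s) (γ t) = t - s := by
  rw [h s ⟨has, hst.trans htb⟩ t ⟨has.trans hst, htb⟩, abs_sub_comm,
    abs_of_nonneg (sub_nonneg.2 hst)]

lemma IsGeodesicSegment.symm {S : Set X} {x y : X} (h : IsGeodesicSegment S x y) :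
    IsGeodesicSegment S y x := by
  obtain ⟨a, b, γ, hab, hγ, rfl, rfl, rfl⟩ := h
  refine ⟨a, b, fun t => γ (a + b - t), hab, fun s hs t ht => ?_, by simp, by simp, ?_⟩
  · rw [hγ _ ⟨by linarith [hs.2], by linarith [hs.1]⟩ _ ⟨by linarith [ht.2], by linarith [ht.1]⟩,
      abs_sub_comm]
    ring_nf
  · change _ = (γ ∘ fun t => a + b - t) '' Icc a b
    rw [image_comp, image_const_sub_Icc]
    ring_nf

lemma IsGeodesicSegment.dist_add_dist {S : Set X} {x y q : X} (h : IsGeodesicSegment S x y)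
    (hq : q ∈ S) : dist x q + dist q y = dist x y := by
  obtain ⟨a, b, γ, hab, hγ, rfl, rfl, rfl⟩ := h
  obtain ⟨r, hr, rfl⟩ := hq
  rw [hγ.dist_eq_sub le_rfl hr.1 hr.2, hγ.dist_eq_sub hr.1 hr.2 le_rfl,
    hγ.dist_eq_sub le_rfl hab le_rfl]
  ring

lemma GeodesicSpace.exists_isGeodesicOn (hX : GeodesicSpace X) (x y : X) :
    ∃ σ : ℝ → X, IsGeodesicOn σ 0 (dist x y) ∧ σ 0 = x ∧ σ (dist x y) = y := by
  obtain ⟨-, a, b, γ, hab, hγ, rfl, rfl, -⟩ := hX x y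
  have hL : dist (γ a) (γ b) = b - a := hγ.dist_eq_sub le_rfl hab le_rfl
  refine ⟨fun t => γ (a + t), fun s hs t ht => ?_, by simp, by simp [hL]⟩
  rw [hL] at hs ht
  simpa using hγ (a + s) ⟨by linarith [hs.1], by linarith [hs.2]⟩
    (a + t) ⟨by linarith [ht.1], by linarith [ht.2]⟩

noncomputable def gromovProduct (x y z : X) : ℝ := (dist x y + dist x z - dist y z) / 2

lemma gromovProduct_comm (x y z : X) : gromovProduct x y z = gromovProduct x z y := by
  unfold gromovProduct
  rw [dist_comm y z]
  ring

lemma gromovProduct_le_dist (x y z : X) : gromovProduct x y z ≤ dist x y := by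
  unfold gromovProduct
  linarith [dist_triangle x y z]

lemma IsGeodesicSegment.gromovProduct_le_dist {S : Set X} {y z q : X}
    (h : IsGeodesicSegment S y z) (hq : q ∈ S) (x : X) : gromovProduct x y z ≤ dist x q := by
  unfold gromovProduct
  linarith [h.dist_add_dist hq, dist_triangle x q y, dist_triangle x q z, dist_comm q y]

lemma DeltaHyperbolic.dist_le_two_mul {δ : ℝ} (hX : GeodesicSpace X) (h : DeltaHyperbolic X δ)
    (hδ : 0 ≤ δ) {x y z : X} {σ τ : ℝ → X}
    (hσ : IsGeodesicOn σ 0 (dist x y)) (hσ0 : σ 0 = x) (hσ1 : σ (dist x y) = y)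
    (hτ : IsGeodesicOn τ 0 (dist x z)) (hτ0 : τ 0 = x) (hτ1 : τ (dist x z) = z)
    {t : ℝ} (ht : 0 ≤ t) (htδ : t + δ < gromovProduct x y z) : dist (σ t) (τ t) ≤ 2 * δ := by
  have hty : t ≤ dist x y := by linarith [gromovProduct_le_dist x y z]
  have htz : t ≤ dist x z := by linarith [gromovProduct_le_dist x z y, gromovProduct_comm x y z]
  have hxτ : dist x (τ t) = t := by simpa [hτ0] using hτ.dist_eq_sub le_rfl ht htz
  obtain ⟨S, hS⟩ := hX y z
  obtain ⟨-, -, hslim⟩ := h x y z _ S _ ⟨0, _, σ, dist_nonneg, hσ, hσ0, hσ1, rfl⟩ hS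
    (IsGeodesicSegment.symm ⟨0, _, τ, dist_nonneg, hτ, hτ0, hτ1, rfl⟩)
  obtain ⟨q, hq | hq, hτq⟩ := hslim (τ t) ⟨t, ⟨ht, htz⟩, rfl⟩
  · obtain ⟨r, hr, rfl⟩ := hq
    have hxσ : dist x (σ r) = r := by simpa [hσ0] using hσ.dist_eq_sub le_rfl hr.1 hr.2
    have hrt : |t - r| ≤ δ := calc
      |t - r| = |dist (τ t) x - dist (σ r) x| := by rw [dist_comm, hxτ, dist_comm, hxσ]
      _ ≤ dist (τ t) (σ r) := abs_dist_sub_le _ _ _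
      _ ≤ δ := hτq
    calc dist (σ t) (τ t) ≤ dist (σ t) (σ r) + dist (σ r) (τ t) := dist_triangle _ _ _
      _ ≤ δ + δ := add_le_add (by rwa [hσ t ⟨ht, hty⟩ r hr]) (by rwa [dist_comm])
      _ = 2 * δ := by ring
  · -- every point of the side `[y, z]` is at least `(y|z)_x > t + δ` away from `x`
    linarith [hS.gromovProduct_le_dist hq x, dist_triangle x (τ t) q]

lemma BusemannConvex.dist_le_div_mul_dist (hX : BusemannConvex X) {σ τ : ℝ → X} {s t : ℝ}
    (hσ : IsGeodesicOn σ 0 s) (hτ : IsGeodesicOn τ 0 s) (h0 : σ 0 = τ 0) (hs : 0 < s)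
    (ht : 0 ≤ t) (hts : t ≤ s) : dist (σ t) (τ t) ≤ t / s * dist (σ s) (τ s) := by
  have h := hX.2 0 s 0 s σ τ hs.le hs.le hσ hτ (t / s)
    ⟨div_nonneg ht hs.le, div_le_one_of_le₀ hts hs.le⟩
  have harg : (1 - t / s) * 0 + t / s * s = t := by
    rw [mul_zero, zero_add, div_mul_cancel₀ t hs.ne']
  rwa [harg, h0, dist_self, mul_zero, zero_add] at h

lemma cauchySeq_of_eventually_le_tendsto_zero {ι : Type*} [Nonempty ι] [SemilatticeSup ι]
    {u : ι → X} (B : ι → ℝ) (h : ∀ᶠ n in atTop, ∀ m ≥ n, dist (u n) (u m) ≤ B n)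
    (hB : Tendsto B atTop (𝓝 0)) : CauchySeq u :=
  Metric.cauchySeq_iff'.2 fun _ hε => (h.and (hB.eventually (gt_mem_nhds hε))).exists.imp
    fun _ ⟨hN, hNε⟩ n hn => (dist_comm _ _).trans_le (hN n hn) |>.trans_lt hNε

lemma isGeodesicRay_of_tendsto {ι : Type*} {l : Filter ι} [l.NeBot] {σ : ι → ℝ → X}
    {L : ι → ℝ} {p : ℝ → X} (hσ : ∀ n, IsGeodesicOn (σ n) 0 (L n)) (hL : Tendsto L l atTop)
    (hp : ∀ t ≥ 0, Tendsto (fun n => σ n t) l (𝓝 (p t))) : IsGeodesicRay p := by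
  intro s hs t ht
  refine tendsto_nhds_unique ((hp s hs).dist (hp t ht)) (tendsto_const_nhds.congr' ?_)
  filter_upwards [hL.eventually_ge_atTop s, hL.eventually_ge_atTop t] with n hns hnt
  exact (hσ n s ⟨hs, hns⟩ t ⟨ht, hnt⟩).symm

lemma le_gromovProduct_of_directional {γ : ℝ → X} {b : ℝ}
    (hγ : ∀ s ∈ Ici (0:ℝ), ∀ t ∈ Ici (0:ℝ),
      |s - t| - b ≤ dist (γ s) (γ t) ∧ dist (γ s) (γ t) ≤ |s - t|)
    {s t : ℝ} (hs : 0 ≤ s) (hst : s ≤ t) : s - b ≤ gromovProduct (γ 0) (γ s) (γ t) := by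
  have ht : 0 ≤ t := hs.trans hst
  have h0s := (hγ 0 self_mem_Ici s hs).1
  have h0t := (hγ 0 self_mem_Ici t ht).1
  have hst' := (hγ s hs t ht).2
  rw [zero_sub, abs_neg, abs_of_nonneg hs] at h0s
  rw [zero_sub, abs_neg, abs_of_nonneg ht] at h0t
  rw [abs_sub_comm, abs_of_nonneg (sub_nonneg.2 hst)] at hst'
  unfold gromovProduct
  linarith

lemma cauchySeq_of_le_gromovProduct (hB : BusemannConvex X) {δ : ℝ} (hδ : 0 ≤ δ)
    (hhyp : DeltaHyperbolic X δ) {x : X} {y : ℕ → X} {b : ℝ}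
    (hy : ∀ n m : ℕ, n ≤ m → (n : ℝ) - b ≤ gromovProduct x (y n) (y m))
    {σ : ℕ → ℝ → X} (hσ : ∀ n, IsGeodesicOn (σ n) 0 (dist x (y n))) (hσ0 : ∀ n, σ n 0 = x)
    (hσ1 : ∀ n, σ n (dist x (y n)) = y n) {t : ℝ} (ht : 0 ≤ t) :
    CauchySeq fun n => σ n t := by
  set c := b + δ + 1
  refine cauchySeq_of_eventually_le_tendsto_zero (fun n : ℕ => t / (n - c) * (2 * δ)) ?_ ?_
  · filter_upwards [tendsto_natCast_atTop_atTop.eventually_gt_atTop (t + c)] with n hn m hnm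
    have hs : 0 < (n : ℝ) - c := by linarith
    have hgromov : (n : ℝ) - c + δ < gromovProduct x (y n) (y m) := by linarith [hy n m hnm]
    have hsn : (n : ℝ) - c ≤ dist x (y n) := by
      linarith [gromovProduct_le_dist x (y n) (y m)]
    have hsm : (n : ℝ) - c ≤ dist x (y m) := by
      linarith [gromovProduct_le_dist x (y m) (y n), gromovProduct_comm x (y n) (y m)]
    calc dist (σ n t) (σ m t) ≤ t / (n - c) * dist (σ n (n - c)) (σ m (n - c)) :=
          hB.dist_le_div_mul_dist ((hσ n).mono le_rfl hsn) ((hσ m).mono le_rfl hsm)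
            ((hσ0 n).trans (hσ0 m).symm) hs ht (by linarith)
      _ ≤ t / (n - c) * (2 * δ) := by
          gcongr
          exact hhyp.dist_le_two_mul hB.1 hδ (hσ n) (hσ0 n) (hσ1 n) (hσ m) (hσ0 m) (hσ1 m)
            hs.le hgromov
  · simpa [sub_eq_add_neg] using (tendsto_const_nhds.div_atTop
      (tendsto_atTop_add_const_right _ (-c) tendsto_natCast_atTop_atTop)).mul_const (2 * δ)

end Geodesics

/-- In a complete Busemann convex space that is additionally `δ`-hyperbolic, every closed
and convex set that is geodesically bounded is directionally bounded. -/
theorem stmt7 {X : Type*} [MetricSpace X] [CompleteSpace X]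
    (hB : BusemannConvex X) (δ : ℝ) (hδ : 0 ≤ δ) (hhyp : DeltaHyperbolic X δ)
    (A : Set X) (hclosed : IsClosed A) (hconv : GeodesicConvex A)
    (hgb : GeodesicallyBounded A) : DirectionallyBounded A := by
  rintro ⟨γ, ⟨b, -, hγ⟩, hγA⟩
  have hy : ∀ n m : ℕ, n ≤ m → (n : ℝ) - b ≤ gromovProduct (γ 0) (γ n) (γ m) :=
    fun n m hnm => le_gromovProduct_of_directional hγ n.cast_nonneg (Nat.cast_le.2 hnm)
  choose σ hσ hσ0 hσ1 using fun n : ℕ => hB.1.exists_isGeodesicOn (γ 0) (γ n)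
  have hL : Tendsto (fun n : ℕ => dist (γ 0) (γ n)) atTop atTop :=
    tendsto_atTop_mono
      (fun n => by linarith [hy n n le_rfl, gromovProduct_le_dist (γ 0) (γ n) (γ n)])
      (tendsto_atTop_add_const_right _ (-b) tendsto_natCast_atTop_atTop)
  have : Nonempty X := ⟨γ 0⟩
  choose! p hp using fun t (ht : 0 ≤ t) => cauchySeq_tendsto_of_complete
    (cauchySeq_of_le_gromovProduct hB hδ hhyp hy hσ hσ0 hσ1 ht)
  refine hgb ⟨p, isGeodesicRay_of_tendsto hσ hL hp,
    fun t ht => hclosed.mem_of_tendsto (hp t ht) ?_⟩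
  filter_upwards [hL.eventually_ge_atTop t] with n hn
  exact hconv _ (hγA 0 self_mem_Ici) _ (hγA n (mem_Ici.2 n.cast_nonneg)) _
    ⟨0, _, σ n, dist_nonneg, hσ n, hσ0 n, hσ1 n, rfl⟩ ⟨t, ⟨ht, hn⟩, rfl⟩
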